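/- arXiv:1511.09338 — 6 statements merged into one kernel-verified Lean document; each statement's English description precedes it below -/
import Mathlib

section
/- Suppose F 0 = 1 and for all a ≥ 1, (a+1)·F a = −∑_{b=0}^{a−1} Ξ b * F (a−1−b), and G 0 = 1 with ∑_{b=0}^{a} G b * F (a−b) = 0 for all a ≥ 1. If moreover Ξ 0 and Ξ 1 commute ((Ξ 0)*(Ξ 1) = (Ξ 1)*(Ξ 0)), then G 3 = (1/8)·(Ξ 0)*(Ξ 1) + (1/4)·Ξ 2. -/
/-!
The recursion for `F` determines `F 1, F 2, F 3` as noncommutative polynomials in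
`Ξ 0, Ξ 1, Ξ 2`, and `G`, being the inverse power series of `F`, satisfies
`G a = -∑_{b<a} G b * F (a - b)` because `F 0 = 1`. Expanding gives
`G 3 = (1/12) Ξ₀Ξ₁ + (1/24) Ξ₁Ξ₀ + (1/4) Ξ₂`, which collapses to the claim once `Ξ 0` and
`Ξ 1` commute.
-/

open Finset

namespace FollandStein

theorem eq_neg_sum_of_sum_mul_eq_zero {R : Type*} [Ring R] {F G : ℕ → R} (hF0 : F 0 = 1)
    {a : ℕ} (h : ∑ b ∈ range (a + 1), G b * F (a - b) = 0) :
    G a = -∑ b ∈ range a, G b * F (a - b) := by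
  rw [sum_range_succ, Nat.sub_self, hF0, mul_one] at h
  exact eq_neg_of_add_eq_zero_right h

variable {R : Type*} [Ring R] [Algebra ℚ R]

theorem eq_inv_smul_of_succ_smul_eq {Ξ F : ℕ → R} {a : ℕ}
    (h : ((a : ℚ) + 1) • F a = -∑ b ∈ range a, Ξ b * F (a - 1 - b)) :
    F a = -((a : ℚ) + 1)⁻¹ • ∑ b ∈ range a, Ξ b * F (a - 1 - b) := by
  have hne : ((a : ℚ) + 1) ≠ 0 := by positivity
  rw [neg_smul, ← smul_neg, ← h, smul_smul, inv_mul_cancel₀ hne, one_smul]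

/-- `A = ∑ₐ F a sᵃ⁺¹` solves `∂ₛ A = 1 - Ξ A` with `Ξ = ∑_b Ξ b sᵇ`. -/
def IsStructureSolution (Ξ F : ℕ → R) : Prop :=
  F 0 = 1 ∧ ∀ a : ℕ, 1 ≤ a → ((a : ℚ) + 1) • F a = -∑ b ∈ range a, Ξ b * F (a - 1 - b)

def IsLeftInverseSeries (G F : ℕ → R) : Prop :=
  G 0 = 1 ∧ ∀ a : ℕ, 1 ≤ a → ∑ b ∈ range (a + 1), G b * F (a - b) = 0

variable {Ξ F G : ℕ → R}

namespace IsStructureSolution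

theorem coeff_one (hF : IsStructureSolution Ξ F) : F 1 = -(1 / 2 : ℚ) • Ξ 0 := by
  rw [eq_inv_smul_of_succ_smul_eq (hF.2 1 le_rfl)]
  simp only [sum_range_one, Nat.sub_self, hF.1, mul_one]
  norm_num

theorem coeff_two (hF : IsStructureSolution Ξ F) :
    F 2 = (1 / 6 : ℚ) • (Ξ 0 * Ξ 0) - (1 / 3 : ℚ) • Ξ 1 := by
  rw [eq_inv_smul_of_succ_smul_eq (hF.2 2 (by norm_num))]
  simp only [sum_range_succ, sum_range_zero, Nat.reduceSub, hF.1, hF.coeff_one]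
  simp only [mul_smul_comm, smul_add, smul_smul, mul_one]
  module

theorem coeff_three (hF : IsStructureSolution Ξ F) :
    F 3 = -(1 / 24 : ℚ) • (Ξ 0 * Ξ 0 * Ξ 0) + (1 / 12 : ℚ) • (Ξ 0 * Ξ 1)
      + (1 / 8 : ℚ) • (Ξ 1 * Ξ 0) - (1 / 4 : ℚ) • Ξ 2 := by
  rw [eq_inv_smul_of_succ_smul_eq (hF.2 3 (by norm_num))]
  simp only [sum_range_succ, sum_range_zero, Nat.reduceSub, hF.1, hF.coeff_one, hF.coeff_two]
  simp only [mul_smul_comm, mul_sub, smul_add, smul_sub, smul_smul, mul_one, mul_assoc]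
  module

end IsStructureSolution

namespace IsLeftInverseSeries

theorem coeff_one (hG : IsLeftInverseSeries G F) (hF : IsStructureSolution Ξ F) :
    G 1 = (1 / 2 : ℚ) • Ξ 0 := by
  rw [eq_neg_sum_of_sum_mul_eq_zero hF.1 (hG.2 1 le_rfl)]
  simp only [sum_range_one, hG.1, hF.coeff_one, one_mul]
  module

theorem coeff_two (hG : IsLeftInverseSeries G F) (hF : IsStructureSolution Ξ F) :
    G 2 = (1 / 12 : ℚ) • (Ξ 0 * Ξ 0) + (1 / 3 : ℚ) • Ξ 1 := by
  rw [eq_neg_sum_of_sum_mul_eq_zero hF.1 (hG.2 2 (by norm_num))]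
  simp only [sum_range_succ, sum_range_zero, Nat.reduceSub, hG.1, hF.coeff_one, hF.coeff_two,
    hG.coeff_one hF]
  simp only [one_mul, mul_smul_comm, smul_mul_assoc, smul_smul, zero_add]
  module

theorem coeff_three (hG : IsLeftInverseSeries G F) (hF : IsStructureSolution Ξ F) :
    G 3 = (1 / 12 : ℚ) • (Ξ 0 * Ξ 1) + (1 / 24 : ℚ) • (Ξ 1 * Ξ 0) + (1 / 4 : ℚ) • Ξ 2 := by
  rw [eq_neg_sum_of_sum_mul_eq_zero hF.1 (hG.2 3 (by norm_num))]
  simp only [sum_range_succ, sum_range_zero, Nat.reduceSub, hG.1, hF.coeff_one, hF.coeff_two,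
    hF.coeff_three, hG.coeff_one hF, hG.coeff_two hF]
  simp only [one_mul, mul_smul_comm, smul_mul_assoc, smul_smul, zero_add, mul_sub, add_mul,
    mul_add, smul_add, mul_assoc]
  module

end IsLeftInverseSeries

end FollandStein

/-- Under the Folland–Stein recursions for the frame matrix
coefficients `G` and its inverse `F` (driven by the structure-function data `Ξ`),
if moreover `Ξ 0` and `Ξ 1` commute, then
`G 3 = (1/8) • (Ξ 0 * Ξ 1) + (1/4) • Ξ 2`. -/
theorem stmt2 {R : Type*} [Ring R] [Algebra ℚ R] (Ξ F G : ℕ → R)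
    (hF0 : F 0 = 1)
    (hFrec : ∀ a : ℕ, 1 ≤ a →
      ((a : ℚ) + 1) • F a = -∑ b ∈ Finset.range a, Ξ b * F (a - 1 - b))
    (hG0 : G 0 = 1)
    (hGF : ∀ a : ℕ, 1 ≤ a → ∑ b ∈ Finset.range (a + 1), G b * F (a - b) = 0)
    (hcomm : Ξ 0 * Ξ 1 = Ξ 1 * Ξ 0) :
    G 3 = (1 / 8 : ℚ) • (Ξ 0 * Ξ 1) + (1 / 4 : ℚ) • Ξ 2 := by
  have hF : FollandStein.IsStructureSolution Ξ F := ⟨hF0, hFrec⟩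
  have hG : FollandStein.IsLeftInverseSeries G F := ⟨hG0, hGF⟩
  rw [hG.coeff_three hF, ← hcomm]
  module
end

section
/- Suppose F 0 = 1 and for all a ≥ 1, (a+1)·F a = −∑_{b=0}^{a−1} Ξ b * F (a−1−b), and G 0 = 1 with ∑_{b=0}^{a} G b * F (a−b) = 0 for all a ≥ 1. Then for every a ≥ 1, G a lies in the ℚ-submodule of R spanned by the set of all products Ξ(b₁−1) * Ξ(b₂−1) * ⋯ * Ξ(b_i−1) taken over all i ≥ 1 and all positive integers b₁,…,b_i with b₁+⋯+b_i = a. -/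
/-!
Grade `Ξ b` by `b + 1`. The span of all products of the `Ξ`'s of total grade `a` is a graded
family of submodules, and both recursions express the `a`-th coefficient through products of
lower coefficients whose grades add up to `a`; so strong induction puts first `F a` and then
`G a` in grade `a`.
-/

open Finset

section GradedRecursion

variable {K R : Type*} [Field K] [Ring R] [Algebra K R]
  (P : ℕ → Submodule K R) [SetLike.GradedMonoid P]

theorem mul_mem_graded_of_add_eq {i j n : ℕ} {x y : R} (h : i + j = n)
    (hx : x ∈ P i) (hy : y ∈ P j) : x * y ∈ P n :=
  h ▸ SetLike.mul_mem_graded hx hy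

theorem mem_graded_of_recursion [CharZero K] (Ξ F : ℕ → R) (hΞ : ∀ b, Ξ b ∈ P (b + 1))
    (hF0 : F 0 = 1)
    (hFrec : ∀ a : ℕ, 1 ≤ a → ((a : K) + 1) • F a = -∑ b ∈ range a, Ξ b * F (a - 1 - b)) :
    ∀ a, F a ∈ P a := by
  intro a
  induction a using Nat.strong_induction_on with
  | _ a ih =>
    rcases Nat.eq_zero_or_pos a with rfl | ha
    · exact hF0 ▸ SetLike.one_mem_graded P
    rw [← Submodule.smul_mem_iff _ (Nat.cast_add_one_ne_zero (R := K) a), hFrec a ha]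
    refine neg_mem (Submodule.sum_mem _ fun b hb => ?_)
    rw [mem_range] at hb
    exact mul_mem_graded_of_add_eq P (by omega) (hΞ b) (ih _ (by omega))

theorem mem_graded_of_mul_eq_one (F G : ℕ → R) (hF : ∀ a, F a ∈ P a) (hF0 : F 0 = 1)
    (hG0 : G 0 = 1)
    (hGF : ∀ a : ℕ, 1 ≤ a → ∑ b ∈ range (a + 1), G b * F (a - b) = 0) :
    ∀ a, G a ∈ P a := by
  intro a
  induction a using Nat.strong_induction_on with
  | _ a ih =>
    rcases Nat.eq_zero_or_pos a with rfl | ha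
    · exact hG0 ▸ SetLike.one_mem_graded P
    have hGa : G a = -∑ b ∈ range a, G b * F (a - b) := by
      have h := hGF a ha
      rw [sum_range_succ, Nat.sub_self, hF0, mul_one] at h
      exact eq_neg_of_add_eq_zero_right h
    rw [hGa]
    refine neg_mem (Submodule.sum_mem _ fun b hb => ?_)
    rw [mem_range] at hb
    exact mul_mem_graded_of_add_eq P (by omega) (ih b hb) (hF _)

end GradedRecursion

section CompositionSpan

variable (K : Type*) {R : Type*} [CommSemiring K] [Semiring R] [Algebra K R]

/-- Unlike the set in `stmt3`, the empty composition is allowed, so that `1` has grade `0`. -/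
def compositionSpan (Ξ : ℕ → R) (a : ℕ) : Submodule K R :=
  Submodule.span K {x : R | ∃ l : List ℕ, (∀ b ∈ l, 1 ≤ b) ∧ l.sum = a ∧
    x = (l.map fun b => Ξ (b - 1)).prod}

instance (Ξ : ℕ → R) : SetLike.GradedMonoid (compositionSpan K Ξ) where
  one_mem := Submodule.subset_span ⟨[], by simp, rfl, rfl⟩
  mul_mem := by
    intro m n x y hx hy
    refine (Submodule.span_mul_span K _ _).le.trans (Submodule.span_mono ?_)
      (Submodule.mul_mem_mul hx hy)
    rintro _ ⟨_, ⟨l₁, hl₁, rfl, rfl⟩, _, ⟨l₂, hl₂, rfl, rfl⟩, rfl⟩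
    refine ⟨l₁ ++ l₂, fun b hb => ?_, List.sum_append, by simp⟩
    exact (List.mem_append.mp hb).elim (hl₁ b) (hl₂ b)

theorem mem_compositionSpan_succ (Ξ : ℕ → R) (b : ℕ) : Ξ b ∈ compositionSpan K Ξ (b + 1) :=
  Submodule.subset_span ⟨[b + 1], by simp, by simp, by simp⟩

end CompositionSpan

/-- Under the Folland–Stein recursions for the frame matrix
coefficients `G` and its inverse `F` (driven by the structure-function data `Ξ`),
for every `a ≥ 1` the element `G a` lies in the `ℚ`-submodule of `R` spanned by
all products `Ξ (b₁ - 1) * ⋯ * Ξ (bᵢ - 1)` over `i ≥ 1` and positive integers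
`b₁, …, bᵢ` with `b₁ + ⋯ + bᵢ = a`. -/
theorem stmt3 {R : Type*} [Ring R] [Algebra ℚ R] (Ξ F G : ℕ → R)
    (hF0 : F 0 = 1)
    (hFrec : ∀ a : ℕ, 1 ≤ a →
      ((a : ℚ) + 1) • F a = -∑ b ∈ Finset.range a, Ξ b * F (a - 1 - b))
    (hG0 : G 0 = 1)
    (hGF : ∀ a : ℕ, 1 ≤ a → ∑ b ∈ Finset.range (a + 1), G b * F (a - b) = 0) :
    ∀ a : ℕ, 1 ≤ a →
      G a ∈ Submodule.span ℚ
        {x : R | ∃ l : List ℕ, l ≠ [] ∧ (∀ b ∈ l, 1 ≤ b) ∧ l.sum = a ∧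
          x = (l.map fun b => Ξ (b - 1)).prod} := by
  intro a ha
  have hF := mem_graded_of_recursion _ Ξ F (mem_compositionSpan_succ ℚ Ξ) hF0 hFrec
  refine Submodule.span_mono ?_ (mem_graded_of_mul_eq_one _ F G hF hF0 hG0 hGF a)
  rintro _ ⟨l, hl, hsum, rfl⟩
  refine ⟨l, ?_, hl, hsum, rfl⟩
  rintro rfl
  simp at hsum
  omega
end

section
/- For every u ∈ V and every s ∈ (0,1), the matrix-valued function s ↦ s·F(su) is differentiable at s with derivative I − Ξ(s,u)·(s·F(su)), where I is the N×N identity matrix and Ξ(s,u) is the N×N matrix with entries Ξ(s,u)^j_k = ∑_{l=1}^{N} C^j_{lk}(E(su))·u^l. -/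
open Topology Filter

attribute [local instance] Matrix.normedAddCommGroup Matrix.normedSpace

set_option maxHeartbeats 1000000 in
/-- (Lemma of Dragomir–Tomassini in Folland–Stein normal
coordinates.)  Let `X 1, …, X N` be smooth vector fields on `ℝ^N` with structure
functions `C`, let `E` be the exponential map of the frame at `x` defined on a
star-shaped neighborhood `V` of `0`, with invertible differential, let `G` be the
frame matrix `G(u)ʲₖ = (DE(u)⁻¹ (X k (E u)))ʲ` and `F = G⁻¹`.  Then for `u ∈ V`
and `s ∈ (0,1)` the matrix-valued map `s ↦ s • F (s • u)` is differentiable at `s`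
with derivative `I - Ξ(s,u) * (s • F (s • u))`, where
`Ξ(s,u)ʲₖ = ∑ₗ Cʲₗₖ (E (s • u)) * uˡ`. -/
theorem stmt4 (N : ℕ) (hN : 1 ≤ N) (x : Fin N → ℝ)
    (X : Fin N → (Fin N → ℝ) → (Fin N → ℝ))
    (hX : ∀ j, ContDiff ℝ (⊤ : ℕ∞) (X j))
    (C : Fin N → Fin N → Fin N → (Fin N → ℝ) → ℝ)
    (hC : ∀ i j k, ContDiff ℝ (⊤ : ℕ∞) (C i j k))
    (hbracket : ∀ (j k : Fin N) (p : Fin N → ℝ),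
      fderiv ℝ (X k) p (X j p) - fderiv ℝ (X j) p (X k p)
        = ∑ i, C i j k p • X i p)
    (V : Set (Fin N → ℝ)) (hVopen : IsOpen V) (hV0 : (0 : Fin N → ℝ) ∈ V)
    (hVstar : ∀ u ∈ V, ∀ s ∈ Set.Icc (0 : ℝ) 1, s • u ∈ V)
    (E : (Fin N → ℝ) → (Fin N → ℝ))
    (hE : ContDiffOn ℝ (⊤ : ℕ∞) E V) (hE0 : E 0 = x)
    (hcurve : ∀ u ∈ V, ∀ s ∈ Set.Icc (0 : ℝ) 1,
      HasDerivAt (fun t : ℝ => E (t • u)) (∑ j, u j • X j (E (s • u))) s)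
    (hDE : ∀ u ∈ V, ∃ A : (Fin N → ℝ) ≃L[ℝ] (Fin N → ℝ),
      (A : (Fin N → ℝ) →L[ℝ] (Fin N → ℝ)) = fderiv ℝ E u)
    (G F : (Fin N → ℝ) → Matrix (Fin N) (Fin N) ℝ)
    (hG : ∀ u ∈ V, ∀ k : Fin N, fderiv ℝ E u (fun j => G u j k) = X k (E u))
    (hF : ∀ u ∈ V, F u * G u = 1 ∧ G u * F u = 1)
    (u : Fin N → ℝ) (hu : u ∈ V) (s : ℝ) (hs : s ∈ Set.Ioo (0 : ℝ) 1) :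
    HasDerivAt (fun t : ℝ => t • F (t • u))
      ((1 : Matrix (Fin N) (Fin N) ℝ)
        - (Matrix.of fun j k => ∑ l, C j l k (E (s • u)) * u l) * (s • F (s • u))) s := by
  have hsne : s ≠ 0 := ne_of_gt hs.1
  set p : Fin N → ℝ := s • u with hpdef
  have hp : p ∈ V := hVstar u hu s ⟨hs.1.le, hs.2.le⟩
  -- basic smoothness of E
  have hEc : ∀ q ∈ V, ContDiffAt ℝ (⊤ : ℕ∞) E q := fun q hq => hE.contDiffAt (hVopen.mem_nhds hq)
  have hEd : ∀ q ∈ V, DifferentiableAt ℝ E q := fun q hq => (hEc q hq).differentiableAt (by simp)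
  have hinj : ∀ q ∈ V, Function.Injective (fderiv ℝ E q) := by
    intro q hq
    obtain ⟨e, he⟩ := hDE q hq
    rw [← he]
    exact e.injective
  -- the pulled-back frame
  set Y : Fin N → (Fin N → ℝ) → (Fin N → ℝ) :=
    fun k q => ContinuousLinearMap.inverse (fderiv ℝ E q) (X k (E q)) with hYdef
  have hYG : ∀ q ∈ V, ∀ k, Y k q = fun j => G q j k := by
    intro q hq k
    obtain ⟨e, he⟩ := hDE q hq
    have h1 : fderiv ℝ E q (fun j => G q j k) = X k (E q) := hG q hq k
    rw [hYdef]
    simp only [← he, ContinuousLinearMap.inverse_equiv]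
    rw [← h1, ← he]
    exact e.symm_apply_apply _
  have hfS : ContDiffAt ℝ (⊤ : ℕ∞) (fderiv ℝ E) p :=
    (hE.fderiv_of_isOpen hVopen (by simp)).contDiffAt (hVopen.mem_nhds hp)
  have hYsm : ∀ k, ContDiffAt ℝ (⊤ : ℕ∞) (Y k) p := by
    intro k
    obtain ⟨e, he⟩ := hDE p hp
    have hinv0 : ContDiffAt ℝ (⊤ : ℕ∞) (ContinuousLinearMap.inverse
        (R := ℝ) (M := Fin N → ℝ) (M₂ := Fin N → ℝ)) (fderiv ℝ E p) :=
      he ▸ contDiffAt_map_inverse e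
    have hinv : ContDiffAt ℝ (⊤ : ℕ∞) (fun q => ContinuousLinearMap.inverse (fderiv ℝ E q)) p :=
      hinv0.comp p hfS
    exact hinv.clm_apply ((hX k).contDiffAt.comp p (hEc p hp))
  have hYd : ∀ k, DifferentiableAt ℝ (Y k) p := fun k => (hYsm k).differentiableAt (by simp)
  set Y' : Fin N → ((Fin N → ℝ) →L[ℝ] (Fin N → ℝ)) := fun k => fderiv ℝ (Y k) p with hY'def
  have hId : ∀ q ∈ V, ∀ k, fderiv ℝ E q (Y k q) = X k (E q) := by
    intro q hq k
    rw [hYG q hq k]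
    exact hG q hq k
  -- second derivative of E at p
  set D' : (Fin N → ℝ) →L[ℝ] ((Fin N → ℝ) →L[ℝ] (Fin N → ℝ)) :=
    fderiv ℝ (fderiv ℝ E) p with hD'def
  have hD'p : HasFDerivAt (fderiv ℝ E) D' p := (hfS.differentiableAt (by simp)).hasFDerivAt
  have hsymm : ∀ v w, D' v w = D' w v := by
    refine second_derivative_symmetric_of_eventually (f := E) ?_ hD'p
    filter_upwards [hVopen.mem_nhds hp] with q hq
    exact (hEd q hq).hasFDerivAt
  -- differentiate the identity (fderiv E q) (Y k q) = X k (E q)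
  have hdag : ∀ k v, fderiv ℝ E p (Y' k v) + D' v (Y k p)
      = fderiv ℝ (X k) (E p) (fderiv ℝ E p v) := by
    intro k v
    have h1 : HasFDerivAt (fun q => fderiv ℝ E q (Y k q))
        ((fderiv ℝ E p).comp (Y' k) + D'.flip (Y k p)) p :=
      hD'p.clm_apply (hYd k).hasFDerivAt
    have h2 : HasFDerivAt (fun q => X k (E q))
        ((fderiv ℝ (X k) (E p)).comp (fderiv ℝ E p)) p :=
      (((hX k).differentiable (by simp) (E p)).hasFDerivAt).comp p (hEd p hp).hasFDerivAt
    have h3 : HasFDerivAt (fun q => fderiv ℝ E q (Y k q))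
        ((fderiv ℝ (X k) (E p)).comp (fderiv ℝ E p)) p := by
      refine h2.congr_of_eventuallyEq ?_
      filter_upwards [hVopen.mem_nhds hp] with q hq
      exact hId q hq k
    have h4 := h1.unique h3
    calc fderiv ℝ E p (Y' k v) + D' v (Y k p)
        = ((fderiv ℝ E p).comp (Y' k) + D'.flip (Y k p)) v := by
          simp [ContinuousLinearMap.add_apply, ContinuousLinearMap.comp_apply,
            ContinuousLinearMap.flip_apply]
      _ = ((fderiv ℝ (X k) (E p)).comp (fderiv ℝ E p)) v := by rw [h4]
      _ = fderiv ℝ (X k) (E p) (fderiv ℝ E p v) := rfl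
  -- bracket identity for the pulled back fields
  have hbrk : ∀ j k, Y' k (Y j p) - Y' j (Y k p) = ∑ i, C i j k (E p) • Y i p := by
    intro j k
    apply hinj p hp
    have e1 := hdag k (Y j p)
    have e2 := hdag j (Y k p)
    have e3 : fderiv ℝ E p (Y' k (Y j p)) - fderiv ℝ E p (Y' j (Y k p))
        = fderiv ℝ (X k) (E p) (X j (E p)) - fderiv ℝ (X j) (E p) (X k (E p)) := by
      rw [hId p hp j] at e1
      rw [hId p hp k] at e2
      have hs12 := hsymm (Y j p) (Y k p)
      rw [e1.symm, e2.symm]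
      rw [hs12]
      abel
    rw [← map_sub] at e3
    rw [e3, hbracket j k (E p), map_sum]
    refine Finset.sum_congr rfl fun i _ => ?_
    rw [map_smul, hId p hp i]
  -- the radial identity
  have hDqq : ∀ q ∈ V, fderiv ℝ E q q = ∑ j, q j • X j (E q) := by
    intro q hq
    have h1 : HasDerivAt (fun t : ℝ => E (t • q)) (∑ j, q j • X j (E ((1:ℝ) • q))) 1 :=
      hcurve q hq 1 ⟨zero_le_one, le_refl 1⟩
    have h2 : HasDerivAt (fun t : ℝ => E (t • q)) (fderiv ℝ E q q) 1 := by
      have hsq : HasDerivAt (fun t : ℝ => t • q) q 1 := by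
        simpa using (hasDerivAt_id (1:ℝ)).smul_const q
      have hE1 : HasFDerivAt E (fderiv ℝ E q) ((1:ℝ) • q) := by
        rw [one_smul]; exact (hEd q hq).hasFDerivAt
      have := hE1.comp_hasDerivAt 1 hsq
      exact this
    have := h2.unique h1
    rw [this]
    simp
  have hrad : ∀ q ∈ V, (∑ l, q l • Y l q) = q := by
    intro q hq
    apply hinj q hq
    rw [map_sum, hDqq q hq]
    refine Finset.sum_congr rfl fun l _ => ?_
    rw [map_smul, hId q hq l]
  -- differentiate the radial identity at p
  have hstar : ∀ v : Fin N → ℝ,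
      (∑ l, (v l • Y l p + p l • Y' l v)) = v := by
    intro v
    have h1 : HasFDerivAt (fun q : Fin N → ℝ => ∑ l, q l • Y l q)
        (∑ l, (p l • Y' l + (ContinuousLinearMap.proj l (R := ℝ) (φ := fun _ : Fin N => ℝ)).smulRight (Y l p))) p := by
      refine HasFDerivAt.fun_sum fun l _ => ?_
      exact (ContinuousLinearMap.proj l).hasFDerivAt.smul (hYd l).hasFDerivAt
    have h2 : HasFDerivAt (fun q : Fin N → ℝ => ∑ l, q l • Y l q)
        (ContinuousLinearMap.id ℝ (Fin N → ℝ)) p := by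
      refine (hasFDerivAt_id p).congr_of_eventuallyEq ?_
      filter_upwards [hVopen.mem_nhds hp] with q hq
      exact (hrad q hq)
    have h3 := h1.unique h2
    calc (∑ l, (v l • Y l p + p l • Y' l v))
        = (∑ l, (p l • Y' l + (ContinuousLinearMap.proj l (R := ℝ) (φ := fun _ : Fin N => ℝ)).smulRight (Y l p))) v := by
          rw [ContinuousLinearMap.sum_apply]
          refine Finset.sum_congr rfl fun l _ => ?_
          simp [ContinuousLinearMap.smulRight_apply, ContinuousLinearMap.proj_apply,
            add_comm]
      _ = v := by rw [h3]; rfl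
  -- the key formula for the radial derivative of Y
  have hdiam : ∀ k, Y' k p
      = Y k p - (∑ l, Y k p l • Y l p) + ∑ i, (∑ l, p l * C i l k (E p)) • Y i p := by
    intro k
    have h1 := hstar (Y k p)
    have h2 : ∀ l, p l • Y' l (Y k p)
        = p l • Y' k (Y l p) - p l • (∑ i, C i l k (E p) • Y i p) := by
      intro l
      rw [← smul_sub, ← hbrk l k]
      simp [sub_sub_cancel]
    have hswap : ∑ l, p l • (∑ i, C i l k (E p) • Y i p)
        = ∑ i, (∑ l, p l * C i l k (E p)) • Y i p := by
      simp_rw [Finset.smul_sum, smul_smul]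
      rw [Finset.sum_comm]
      simp_rw [← Finset.sum_smul]
    have hYk' : ∑ l, p l • Y' k (Y l p) = Y' k p := by
      have hr := hrad p hp
      conv_rhs => rw [← hr]
      rw [map_sum]
      exact Finset.sum_congr rfl fun l _ => ((Y' k).map_smul _ _).symm
    have h4 : Y k p = (∑ l, Y k p l • Y l p)
        + (Y' k p - ∑ i, (∑ l, p l * C i l k (E p)) • Y i p) := by
      calc Y k p = ∑ l, (Y k p l • Y l p + p l • Y' l (Y k p)) := h1.symm
        _ = (∑ l, Y k p l • Y l p) + ∑ l, p l • Y' l (Y k p) := Finset.sum_add_distrib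
        _ = (∑ l, Y k p l • Y l p) + (∑ l, p l • Y' k (Y l p)
              - ∑ l, p l • (∑ i, C i l k (E p) • Y i p)) := by
            rw [← Finset.sum_sub_distrib]
            congr 1
            exact Finset.sum_congr rfl fun l _ => h2 l
        _ = (∑ l, Y k p l • Y l p)
              + (Y' k p - ∑ i, (∑ l, p l * C i l k (E p)) • Y i p) := by
            rw [hYk', hswap]
    obtain ⟨Sv, hSv⟩ : ∃ v, (∑ l, Y k p l • Y l p) = v := ⟨_, rfl⟩
    obtain ⟨Tv, hTv⟩ : ∃ v, (∑ i, (∑ l, p l * C i l k (E p)) • Y i p) = v := ⟨_, rfl⟩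
    rw [hSv, hTv] at h4 ⊢
    rw [h4, add_sub_cancel_left, sub_add_cancel]
  -- eventually t • u ∈ V near s
  have hst : ∀ᶠ t in 𝓝 s, t • u ∈ V := by
    have hc : Continuous fun t : ℝ => t • u := continuous_id.smul continuous_const
    exact hc.continuousAt.preimage_mem_nhds (hVopen.mem_nhds (by rw [← hpdef]; exact hp))
  have hsu : HasDerivAt (fun t : ℝ => t • u) u s := by
    simpa using (hasDerivAt_id s).smul_const u
  -- derivative of the G-entries along the ray
  have hYent : ∀ k, HasDerivAt (fun t : ℝ => Y k (t • u)) (Y' k u) s := by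
    intro k
    have h1 : HasFDerivAt (Y k) (Y' k) ((fun t : ℝ => t • u) s) := (hYd k).hasFDerivAt
    exact h1.comp_hasDerivAt s hsu
  -- matrices
  set A : Matrix (Fin N) (Fin N) ℝ := G p with hAdef
  set B : Matrix (Fin N) (Fin N) ℝ := F p with hBdef
  set Xi : Matrix (Fin N) (Fin N) ℝ := Matrix.of fun j k => ∑ l, C j l k (E p) * u l with hXidef
  set A' : Matrix (Fin N) (Fin N) ℝ := Matrix.of fun j k => Y' k u j with hA'def
  have hAB : A * B = 1 := (hF p hp).2
  have hBA : B * A = 1 := (hF p hp).1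
  have hYA : ∀ (m j' : Fin N), Y m p j' = A j' m := by
    intro m j'
    rw [hYG p hp m]
  have hAent : ∀ j k, HasDerivAt (fun t : ℝ => G (t • u) j k) (A' j k) s := by
    intro j k
    have h1 : HasDerivAt (fun t : ℝ => Y k (t • u) j) (Y' k u j) s :=
      hasDerivAt_pi.1 (hYent k) j
    refine h1.congr_of_eventuallyEq ?_
    filter_upwards [hst] with t ht
    rw [hYG (t • u) ht k]
  -- the matrix ODE for G along the ray
  have hM1 : s • A' = A - A * A + s • (A * Xi) := by
    ext j k
    have hd : Y' k p j = Y k p j - (∑ l, Y k p l * Y l p j)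
        + ∑ i, (∑ l, p l * C i l k (E p)) * Y i p j := by
      have h0 := congrFun (hdiam k) j
      simpa [Finset.sum_apply, Pi.smul_apply, smul_eq_mul] using h0
    have hY'j : Y' k p j = s * Y' k u j := by
      conv_lhs => rw [hpdef]
      rw [(Y' k).map_smul]
      rfl
    have hpl : ∀ l, p l = s * u l := fun l => rfl
    simp only [Matrix.smul_apply, Matrix.sub_apply, Matrix.add_apply, Matrix.mul_apply,
      Matrix.of_apply, hA'def, hXidef, smul_eq_mul]
    rw [← hY'j, hd]
    congr 1
    · congr 1
      · exact hYA k j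
      · refine Finset.sum_congr rfl fun l _ => ?_
        rw [hYA k l, hYA l j]; ring
    · simp only [Finset.mul_sum]
      refine Finset.sum_congr rfl fun i _ => ?_
      simp only [hpl, Finset.sum_mul, Finset.mul_sum]
      rw [hYA i j]
      refine Finset.sum_congr rfl fun l _ => ?_
      ring
  -- smoothness of the entries of F near p, via inversion of continuous linear maps
  set T : (Fin N → ℝ) → ((Fin N → ℝ) →L[ℝ] (Fin N → ℝ)) :=
    fun q => ∑ k, (ContinuousLinearMap.proj (R := ℝ) (φ := fun _ : Fin N => ℝ) k).smulRight (Y k q)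
    with hTdef
  set S : (Fin N → ℝ) → ((Fin N → ℝ) →L[ℝ] (Fin N → ℝ)) :=
    fun q => ∑ k, (ContinuousLinearMap.proj (R := ℝ) (φ := fun _ : Fin N => ℝ) k).smulRight
      (fun j => F q j k) with hSdef
  have hTapp : ∀ q ∈ V, ∀ v, T q v = (G q).mulVec v := by
    intro q hq v
    funext j
    rw [hTdef]
    simp only [ContinuousLinearMap.sum_apply, ContinuousLinearMap.smulRight_apply,
      ContinuousLinearMap.proj_apply, Finset.sum_apply, Pi.smul_apply, smul_eq_mul,
      Matrix.mulVec, dotProduct]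
    refine Finset.sum_congr rfl fun k _ => ?_
    rw [hYG q hq k]
    ring
  have hSapp : ∀ q v, S q v = (F q).mulVec v := by
    intro q v
    funext j
    rw [hSdef]
    simp only [ContinuousLinearMap.sum_apply, ContinuousLinearMap.smulRight_apply,
      ContinuousLinearMap.proj_apply, Finset.sum_apply, Pi.smul_apply, smul_eq_mul,
      Matrix.mulVec, dotProduct]
    exact Finset.sum_congr rfl fun k _ => by ring
  have hTS : ∀ q ∈ V, T q * S q = 1 ∧ S q * T q = 1 := by
    intro q hq
    constructor <;> (ext v; simp only [ContinuousLinearMap.mul_apply,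
      ContinuousLinearMap.one_apply])
    · rw [hSapp q v, hTapp q hq, Matrix.mulVec_mulVec, (hF q hq).2, Matrix.one_mulVec]
    · rw [hTapp q hq v, hSapp, Matrix.mulVec_mulVec, (hF q hq).1, Matrix.one_mulVec]
  have hRinvT : ∀ q ∈ V, Ring.inverse (T q) = S q := fun q hq =>
    Ring.inverse_unit ⟨T q, S q, (hTS q hq).1, (hTS q hq).2⟩
  have hTsm : ContDiffAt ℝ (⊤ : ℕ∞) T p := by
    refine ContDiffAt.sum fun k _ => ?_
    exact ((ContinuousLinearMap.smulRightL ℝ (Fin N → ℝ) (Fin N → ℝ)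
      (ContinuousLinearMap.proj k)).contDiff.contDiffAt).comp p (hYsm k)
  have hRinvSm : ContDiffAt ℝ (⊤ : ℕ∞) (fun q => Ring.inverse (T q)) p :=
    ContDiffAt.comp (g := Ring.inverse) p
      (contDiffAt_ringInverse ℝ ⟨T p, S p, (hTS p hp).1, (hTS p hp).2⟩) hTsm
  have hFsm : ∀ j k, ContDiffAt ℝ (⊤ : ℕ∞) (fun q => F q j k) p := by
    intro j k
    have h5 : ContDiffAt ℝ (⊤ : ℕ∞) (fun q => Ring.inverse (T q) (Pi.single k (1:ℝ))) p :=
      hRinvSm.clm_apply contDiffAt_const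
    refine (contDiffAt_pi.1 h5 j).congr_of_eventuallyEq ?_
    filter_upwards [hVopen.mem_nhds hp] with q hq
    rw [hRinvT q hq, hSapp, Matrix.mulVec_single]
    simp
  -- derivative of the entries of F along the ray
  set B' : Matrix (Fin N) (Fin N) ℝ :=
    Matrix.of fun j k => fderiv ℝ (fun q => F q j k) p u with hB'def
  have hBent : ∀ j k, HasDerivAt (fun t : ℝ => F (t • u) j k) (B' j k) s := by
    intro j k
    have h1 : HasFDerivAt (fun q => F q j k) (fderiv ℝ (fun q => F q j k) p)
        ((fun t : ℝ => t • u) s) := ((hFsm j k).differentiableAt (by simp)).hasFDerivAt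
    exact h1.comp_hasDerivAt s hsu
  -- differentiating F * G = 1 along the ray
  have hM2 : B' * A + B * A' = 0 := by
    ext j k
    have h1 : HasDerivAt (fun t : ℝ => ∑ m, F (t • u) j m * G (t • u) m k)
        (∑ m, (B' j m * A m k + B j m * A' m k)) s := by
      refine HasDerivAt.fun_sum fun m _ => ?_
      simpa using (hBent j m).fun_mul (hAent m k)
    have h2 : HasDerivAt (fun t : ℝ => ∑ m, F (t • u) j m * G (t • u) m k)
        (0 : ℝ) s := by
      refine (hasDerivAt_const s ((1 : Matrix (Fin N) (Fin N) ℝ) j k)).congr_of_eventuallyEq ?_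
      filter_upwards [hst] with t ht
      have := (hF (t • u) ht).1
      calc ∑ m, F (t • u) j m * G (t • u) m k = (F (t • u) * G (t • u)) j k := by
            rw [Matrix.mul_apply]
        _ = (1 : Matrix (Fin N) (Fin N) ℝ) j k := by rw [this]
    have h3 := h1.unique h2
    simp only [Matrix.add_apply, Matrix.mul_apply, Matrix.zero_apply,
      ← Finset.sum_add_distrib]
    exact h3
  -- the derivative of t • F (t • u)
  have hPhi : HasDerivAt (fun t : ℝ => t • F (t • u)) (B + s • B') s := by
    refine hasDerivAt_pi.2 fun j => hasDerivAt_pi.2 fun k => ?_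
    have h1 : HasDerivAt (fun t : ℝ => t * F (t • u) j k) (1 * B j k + s * B' j k) s :=
      (hasDerivAt_id s).mul (hBent j k)
    have h2 : (B + s • B') j k = 1 * B j k + s * B' j k := by
      simp [Matrix.add_apply, Matrix.smul_apply, smul_eq_mul]
    rw [show (fun t : ℝ => (t • F (t • u)) j k) = fun t : ℝ => t * F (t • u) j k from rfl]
    rw [h2]
    exact h1
  -- final algebra
  have hBA' : B' * A = -(B * A') := eq_neg_of_add_eq_zero_left hM2
  have hB'eq : B' = -(B * A' * B) := by
    calc B' = B' * (A * B) := by rw [hAB, mul_one]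
      _ = B' * A * B := (mul_assoc _ _ _).symm
      _ = -(B * A') * B := by rw [hBA']
      _ = -(B * A' * B) := by rw [neg_mul]
  have hsB' : s • B' = -(B * (s • A') * B) := by
    have h9 : B * (s • A') * B = s • (B * A' * B) := by
      rw [Matrix.mul_smul, Matrix.smul_mul]
    rw [hB'eq, smul_neg, ← h9]
  have hexp : B * (s • A') * B = B - 1 + s • (Xi * B) := by
    have e1 : B * A * B = B := by rw [hBA, one_mul]
    have e2 : B * (A * A) * B = 1 := by
      have : B * (A * A) = A := by rw [← mul_assoc, hBA, one_mul]
      rw [this, hAB]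
    have e3 : B * (s • (A * Xi)) * B = s • (Xi * B) := by
      have h10 : B * (A * Xi) = Xi := by rw [← mul_assoc, hBA, one_mul]
      rw [Matrix.mul_smul, h10, Matrix.smul_mul]
    calc B * (s • A') * B = B * (A - A * A + s • (A * Xi)) * B := by rw [hM1]
      _ = (B * (A - A * A) + B * (s • (A * Xi))) * B := by rw [mul_add]
      _ = (B * A - B * (A * A) + B * (s • (A * Xi))) * B := by rw [mul_sub]
      _ = (B * A - B * (A * A)) * B + B * (s • (A * Xi)) * B := by rw [add_mul]
      _ = B * A * B - B * (A * A) * B + B * (s • (A * Xi)) * B := by rw [sub_mul]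
      _ = B - 1 + s • (Xi * B) := by rw [e1, e2, e3]
  have hfinal : B + s • B' = 1 - Xi * (s • B) := by
    rw [hsB', hexp, ← Matrix.mul_smul]
    abel
  rw [← hfinal]
  exact hPhi
end

section
/- G(0) is the N×N identity matrix, and for all j,k,l ∈ {1,…,N}, the partial derivative of the entry u ↦ G(u)^j_k at u = 0 in the direction of the l-th coordinate equals (1/2)·C^j_{lk}(x). -/
open Topology Filter


/-- In Folland–Stein normal coordinates at `x` (given by the
exponential map `E` of the smooth frame `X 1, …, X N` on a star-shaped
neighborhood `V` of `0`), the frame matrix `G(u)ʲₖ = (DE(u)⁻¹ (X k (E u)))ʲ`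
satisfies `G(0) = I`, and for all `j, k, l` the partial derivative of
`u ↦ G(u)ʲₖ` at `u = 0` in the `l`-th coordinate direction equals
`(1/2) * Cʲₗₖ(x)`, where `C` are the structure functions of the frame. -/
theorem stmt5 (N : ℕ) (hN : 1 ≤ N) (x : Fin N → ℝ)
    (X : Fin N → (Fin N → ℝ) → (Fin N → ℝ))
    (hX : ∀ j, ContDiff ℝ (⊤ : ℕ∞) (X j))
    (C : Fin N → Fin N → Fin N → (Fin N → ℝ) → ℝ)
    (hC : ∀ i j k, ContDiff ℝ (⊤ : ℕ∞) (C i j k))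
    (hbracket : ∀ (j k : Fin N) (p : Fin N → ℝ),
      fderiv ℝ (X k) p (X j p) - fderiv ℝ (X j) p (X k p)
        = ∑ i, C i j k p • X i p)
    (V : Set (Fin N → ℝ)) (hVopen : IsOpen V) (hV0 : (0 : Fin N → ℝ) ∈ V)
    (hVstar : ∀ u ∈ V, ∀ s ∈ Set.Icc (0 : ℝ) 1, s • u ∈ V)
    (E : (Fin N → ℝ) → (Fin N → ℝ))
    (hE : ContDiffOn ℝ (⊤ : ℕ∞) E V) (hE0 : E 0 = x)
    (hcurve : ∀ u ∈ V, ∀ s ∈ Set.Icc (0 : ℝ) 1,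
      HasDerivAt (fun t : ℝ => E (t • u)) (∑ j, u j • X j (E (s • u))) s)
    (hDE : ∀ u ∈ V, ∃ A : (Fin N → ℝ) ≃L[ℝ] (Fin N → ℝ),
      (A : (Fin N → ℝ) →L[ℝ] (Fin N → ℝ)) = fderiv ℝ E u)
    (G : (Fin N → ℝ) → Matrix (Fin N) (Fin N) ℝ)
    (hG : ∀ u ∈ V, ∀ k : Fin N, fderiv ℝ E u (fun j => G u j k) = X k (E u))
    (hGsmooth : ∀ j k : Fin N, ContDiffOn ℝ (⊤ : ℕ∞) (fun u => G u j k) V) :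
    G 0 = 1 ∧ ∀ j k l : Fin N,
      fderiv ℝ (fun u => G u j k) 0 (Pi.single l 1) = (1 / 2) * C j l k x := by
  classical
  obtain ⟨L, hLdef⟩ : ∃ L : Fin N → Fin N → (Fin N → ℝ) →L[ℝ] ℝ,
      ∀ j k, L j k = fderiv ℝ (fun w => G w j k) 0 := ⟨_, fun _ _ => rfl⟩
  have hEat : ∀ u ∈ V, DifferentiableAt ℝ E u := fun u hu =>
    (hE.contDiffAt (hVopen.mem_nhds hu)).differentiableAt (by simp)
  have hGat : ∀ (j k : Fin N), ∀ u ∈ V, DifferentiableAt ℝ (fun w => G w j k) u :=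
    fun j k u hu => ((hGsmooth j k).contDiffAt (hVopen.mem_nhds hu)).differentiableAt (by simp)
  have hGhas : ∀ j k : Fin N, HasFDerivAt (fun w => G w j k) (L j k) 0 := fun j k => by
    rw [hLdef]; exact (hGat j k 0 hV0).hasFDerivAt
  -- derivative of E at points of V along the radial direction
  have hD0V : ∀ u ∈ V, fderiv ℝ E 0 u = ∑ j, u j • X j x := by
    intro u hu
    have h1 := hcurve u hu 0 ⟨le_rfl, zero_le_one⟩
    rw [zero_smul, hE0] at h1
    have hc : HasDerivAt (fun t : ℝ => t • u) u 0 := by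
      simpa using (hasDerivAt_id (0 : ℝ)).smul_const u
    have hf : HasFDerivAt E (fderiv ℝ E 0) ((fun t : ℝ => t • u) 0) := by
      simpa using (hEat 0 hV0).hasFDerivAt
    exact (hf.comp_hasDerivAt 0 hc).unique h1
  have hev : ∀ v : Fin N → ℝ, ∀ᶠ t : ℝ in 𝓝 0, t • v ∈ V := by
    intro v
    have hc : ContinuousAt (fun t : ℝ => t • v) 0 := by fun_prop
    exact hc.eventually_mem (by simpa using hVopen.mem_nhds hV0)
  have hD0 : ∀ v : Fin N → ℝ, fderiv ℝ E 0 v = ∑ j, v j • X j x := by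
    intro v
    obtain ⟨t, htV, htne⟩ : ∃ t : ℝ, t • v ∈ V ∧ t ≠ 0 := by
      have h' : ∀ᶠ t : ℝ in 𝓝[≠] (0 : ℝ), t • v ∈ V ∧ t ≠ 0 :=
        ((hev v).filter_mono nhdsWithin_le_nhds).and
          (eventually_mem_nhdsWithin.mono fun t ht => ht)
      exact h'.exists
    have h1 := hD0V (t • v) htV
    rw [map_smul] at h1
    have h2 : t • fderiv ℝ E 0 v = t • ∑ j, v j • X j x := by
      rw [h1, Finset.smul_sum]
      exact Finset.sum_congr rfl fun j _ => by
        simp [Pi.smul_apply, smul_smul]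
    exact smul_right_injective _ htne h2
  have hDu : ∀ u ∈ V, fderiv ℝ E u u = ∑ j, u j • X j (E u) := by
    intro u hu
    have h1 := hcurve u hu 1 ⟨zero_le_one, le_rfl⟩
    rw [one_smul] at h1
    have hc : HasDerivAt (fun t : ℝ => t • u) u 1 := by
      simpa using (hasDerivAt_id (1 : ℝ)).smul_const u
    have hf : HasFDerivAt E (fderiv ℝ E u) ((fun t : ℝ => t • u) 1) := by
      simpa using (hEat u hu).hasFDerivAt
    exact (hf.comp_hasDerivAt 1 hc).unique h1
  have hinj : ∀ u ∈ V, Function.Injective (fderiv ℝ E u) := by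
    intro u hu
    obtain ⟨A, hA⟩ := hDE u hu
    intro a b hab
    apply A.injective
    have ha : (A : (Fin N → ℝ) →L[ℝ] (Fin N → ℝ)) a = (A : (Fin N → ℝ) →L[ℝ] (Fin N → ℝ)) b := by
      rw [hA]; exact hab
    simpa using ha
  -- the radial identity for G
  have hGu : ∀ u ∈ V, ∀ j, ∑ k, u k * G u j k = u j := by
    intro u hu
    have key : fderiv ℝ E u (∑ k, u k • fun j => G u j k) = fderiv ℝ E u u := by
      rw [map_sum, hDu u hu]
      exact Finset.sum_congr rfl fun k _ => by rw [map_smul, hG u hu k]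
    have h := hinj u hu key
    intro j
    have hj := congrFun h j
    simpa [Finset.sum_apply, Pi.smul_apply, smul_eq_mul] using hj
  -- G 0 = identity
  have hproj : ∀ j : Fin N, HasFDerivAt (fun u : Fin N → ℝ => u j)
      (ContinuousLinearMap.proj j : (Fin N → ℝ) →L[ℝ] ℝ) (0 : Fin N → ℝ) :=
    fun j => by
      have h := (ContinuousLinearMap.proj j : (Fin N → ℝ) →L[ℝ] ℝ).hasFDerivAt
        (x := (0 : Fin N → ℝ))
      exact h
  have hG0 : ∀ j i : Fin N, G 0 j i = if j = i then 1 else 0 := by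
    intro j i
    have hterm : ∀ k : Fin N, HasFDerivAt (fun u : Fin N → ℝ => u k * G u j k)
        ((G 0 j k) • (ContinuousLinearMap.proj k : (Fin N → ℝ) →L[ℝ] ℝ)) 0 := by
      intro k
      have := (hproj k).fun_mul (hGhas j k)
      simpa using this
    have hφ : HasFDerivAt (fun u : Fin N → ℝ => (∑ k, u k * G u j k) - u j)
        ((∑ k, (G 0 j k) • (ContinuousLinearMap.proj k : (Fin N → ℝ) →L[ℝ] ℝ))
          - ContinuousLinearMap.proj j) 0 :=
      (HasFDerivAt.fun_sum (fun k _ => hterm k)).fun_sub (hproj j)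
    have hzero : fderiv ℝ (fun u : Fin N → ℝ => (∑ k, u k * G u j k) - u j) 0 = 0 := by
      have heq : (fun u : Fin N → ℝ => (∑ k, u k * G u j k) - u j)
          =ᶠ[𝓝 (0 : Fin N → ℝ)] (fun _ => (0 : ℝ)) := by
        filter_upwards [hVopen.mem_nhds hV0] with u hu
        simp [hGu u hu j]
      rw [heq.fderiv_eq, fderiv_const_apply]
    have hD := hφ.fderiv
    rw [hzero] at hD
    have happ := congrArg (fun T : (Fin N → ℝ) →L[ℝ] ℝ => T (Pi.single i 1)) hD.symm
    simp only [ContinuousLinearMap.sub_apply, ContinuousLinearMap.sum_apply,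
      ContinuousLinearMap.smul_apply, ContinuousLinearMap.proj_apply,
      ContinuousLinearMap.zero_apply] at happ
    have hsum : ∑ k, G 0 j k • (Pi.single i (1:ℝ) : Fin N → ℝ) k = G 0 j i := by
      rw [Finset.sum_eq_single i]
      · simp
      · intro b _ hb; simp [Pi.single_eq_of_ne hb]
      · simp
    rw [hsum] at happ
    have : G 0 j i - (Pi.single i (1:ℝ) : Fin N → ℝ) j = 0 := happ
    have h2 : G 0 j i = (Pi.single i (1:ℝ) : Fin N → ℝ) j := by linarith
    rw [h2, Pi.single_apply]
  have hG0M : G 0 = 1 := by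
    ext j i
    rw [hG0 j i, Matrix.one_apply]
  -- the quadratic (symmetric) identity
  have hquad : ∀ (j : Fin N) (u : Fin N → ℝ), ∑ k, u k * (L j k u) = 0 := by
    intro j u
    have heq : (fun t : ℝ => ∑ k, u k * G (t • u) j k) =ᶠ[𝓝 (0 : ℝ)] (fun _ => u j) := by
      filter_upwards [hev u] with t ht
      rcases eq_or_ne t 0 with rfl | htne
      · simp only [zero_smul]
        have : ∀ k, u k * G 0 j k = u k * if j = k then 1 else 0 := fun k => by rw [hG0]
        simp only [this, mul_ite, mul_one, mul_zero]
        simp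
      · have h1 := hGu (t • u) ht j
        have h2 : t * ∑ k, u k * G (t • u) j k = t * u j := by
          rw [Finset.mul_sum]
          rw [show (t • u) j = t * u j from rfl] at h1
          rw [← h1]
          exact Finset.sum_congr rfl fun k _ => by
            show t * (u k * G (t • u) j k) = (t • u) k * G (t • u) j k
            rw [show (t • u) k = t * u k from rfl]; ring
        exact mul_left_cancel₀ htne h2
    have hd0 : HasDerivAt (fun t : ℝ => ∑ k, u k * G (t • u) j k) (∑ k, u k * (L j k u)) 0 := by
      apply HasDerivAt.fun_sum
      intro k _
      have hc : HasDerivAt (fun t : ℝ => t • u) u 0 := by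
        simpa using (hasDerivAt_id (0 : ℝ)).smul_const u
      have hfk : HasFDerivAt (fun w => G w j k) (L j k) ((fun t : ℝ => t • u) 0) := by
        simpa using hGhas j k
      exact (hfk.comp_hasDerivAt 0 hc).const_mul (u k)
    have h3 : deriv (fun t : ℝ => ∑ k, u k * G (t • u) j k) 0 = 0 := by
      rw [heq.deriv_eq, deriv_const]
    rw [← hd0.deriv, h3]
  have hs : ∀ (j l : Fin N) (v : Fin N → ℝ),
      ∑ m, (Pi.single l (1:ℝ) : Fin N → ℝ) m * L j m v = L j l v := by
    intro j l v
    rw [Finset.sum_eq_single l]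
    · simp
    · intro b _ hb; simp [Pi.single_eq_of_ne hb]
    · simp
  have hsym : ∀ j l k : Fin N,
      L j k (Pi.single l 1) + L j l (Pi.single k 1) = 0 := by
    intro j l k
    have h1 := hquad j (Pi.single l 1 + Pi.single k 1)
    have h2 := hquad j (Pi.single l 1)
    have h3 := hquad j (Pi.single k 1)
    simp only [map_add, Pi.add_apply, add_mul, mul_add, Finset.sum_add_distrib] at h1
    rw [hs j l, hs j l, hs j k, hs j k] at h1
    rw [hs j l] at h2
    rw [hs j k] at h3
    linarith
  -- second-derivative (antisymmetric) identity
  have hEC2 : ContDiffAt ℝ 2 E 0 :=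
    (hE.contDiffAt (hVopen.mem_nhds hV0)).of_le (by exact WithTop.coe_le_coe.mpr (le_top : (2 : ℕ∞) ≤ ⊤))
  have hsnd : IsSymmSndFDerivAt ℝ E 0 := hEC2.isSymmSndFDerivAt (by simp)
  have hfd : HasFDerivAt (fderiv ℝ E) (fderiv ℝ (fderiv ℝ E) 0) 0 :=
    ((hEC2.fderiv_right (m := 1) (by norm_num)).differentiableAt (by norm_num)).hasFDerivAt
  have hgk : ∀ k : Fin N, HasFDerivAt (fun u => (fun j => G u j k))
      (ContinuousLinearMap.pi (fun j => L j k)) 0 := by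
    intro k
    rw [hasFDerivAt_pi]
    intro j
    exact hGhas j k
  have hΦ : ∀ k : Fin N, HasFDerivAt (fun u => fderiv ℝ E u (fun j => G u j k))
      ((fderiv ℝ E 0).comp (ContinuousLinearMap.pi (fun j => L j k))
        + (fderiv ℝ (fderiv ℝ E) 0).flip (fun j => G 0 j k)) 0 :=
    fun k => hfd.clm_apply (hgk k)
  have hΨ : ∀ k : Fin N, HasFDerivAt (fun u => X k (E u))
      ((fderiv ℝ (X k) x).comp (fderiv ℝ E 0)) 0 := by
    intro k
    have h1 : HasFDerivAt E (fderiv ℝ E 0) 0 := (hEat 0 hV0).hasFDerivAt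
    have h2 : HasFDerivAt (X k) (fderiv ℝ (X k) x) (E 0) := by
      rw [hE0]
      exact (((hX k).differentiable (by simp)) x).hasFDerivAt
    exact h2.comp 0 h1
  have hder_eq : ∀ k : Fin N,
      (fderiv ℝ E 0).comp (ContinuousLinearMap.pi (fun j => L j k))
        + (fderiv ℝ (fderiv ℝ E) 0).flip (fun j => G 0 j k)
      = (fderiv ℝ (X k) x).comp (fderiv ℝ E 0) := by
    intro k
    have heq : (fun u => fderiv ℝ E u (fun j => G u j k))
        =ᶠ[𝓝 (0 : Fin N → ℝ)] (fun u => X k (E u)) := by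
      filter_upwards [hVopen.mem_nhds hV0] with u hu
      exact hG u hu k
    rw [← (hΦ k).fderiv, ← (hΨ k).fderiv]
    exact heq.fderiv_eq
  have hD0single : ∀ l : Fin N, fderiv ℝ E 0 (Pi.single l 1) = X l x := by
    intro l
    rw [hD0]
    rw [Finset.sum_eq_single l]
    · simp
    · intro b _ hb; simp [Pi.single_eq_of_ne hb]
    · simp
  have hg0single : ∀ k : Fin N, (fun j => G 0 j k) = (Pi.single k (1:ℝ) : Fin N → ℝ) := by
    intro k
    funext j
    rw [hG0, Pi.single_apply]
  have hrel : ∀ k l : Fin N,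
      fderiv ℝ E 0 (fun j => L j k (Pi.single l 1))
        + fderiv ℝ (fderiv ℝ E) 0 (Pi.single l 1) (Pi.single k 1)
      = fderiv ℝ (X k) x (X l x) := by
    intro k l
    have h := congrArg (fun T : (Fin N → ℝ) →L[ℝ] (Fin N → ℝ) => T (Pi.single l 1)) (hder_eq k)
    simp only [ContinuousLinearMap.add_apply, ContinuousLinearMap.comp_apply,
      ContinuousLinearMap.flip_apply] at h
    rw [hg0single k, hD0single l] at h
    have hpi : (ContinuousLinearMap.pi (fun j => L j k)) (Pi.single l 1)
        = fun j => L j k (Pi.single l 1) := rfl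
    rw [hpi] at h
    exact h
  have hanti : ∀ j l k : Fin N,
      L j k (Pi.single l 1) - L j l (Pi.single k 1) = C j l k x := by
    intro j l k
    have h1 := hrel k l
    have h2 := hrel l k
    have hswap : fderiv ℝ (fderiv ℝ E) 0 (Pi.single l 1) (Pi.single k 1)
        = fderiv ℝ (fderiv ℝ E) 0 (Pi.single k 1) (Pi.single l 1) := hsnd _ _
    have h3 : fderiv ℝ E 0 ((fun j => L j k (Pi.single l 1)) - (fun j => L j l (Pi.single k 1)))
        = fderiv ℝ (X k) x (X l x) - fderiv ℝ (X l) x (X k x) := by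
      rw [map_sub, ← h1, ← h2, hswap]
      abel
    rw [hbracket l k x] at h3
    have h4 : fderiv ℝ E 0 (fun i => C i l k x) = ∑ i, C i l k x • X i x := by
      rw [hD0]
    have h5 : (fun j => L j k (Pi.single l 1)) - (fun j => L j l (Pi.single k 1))
        = fun i => C i l k x := hinj 0 hV0 (by rw [h3, h4])
    simpa using congrFun h5 j
  refine ⟨hG0M, fun j k l => ?_⟩
  have h1 := hsym j l k
  have h2 := hanti j l k
  rw [← hLdef]
  linarith
end

section
/- For each α ∈ {1,…,n}, the set of 2n+1 vectors {X̂_1(0),…,X̂_{2n}(0)} ∪ {[X̂_α, X̂_{n+α}](0)} spans ℝ^{2n+1} over ℝ. -/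
set_option maxHeartbeats 1000000

noncomputable def lieBracket {N : ℕ} (V W : (Fin N → ℝ) → (Fin N → ℝ))
    (p : Fin N → ℝ) : Fin N → ℝ :=
  fderiv ℝ W p (V p) - fderiv ℝ V p (W p)

noncomputable def stdBasis {N : ℕ} (i : Fin N) : Fin N → ℝ :=
  Pi.single i 1

noncomputable def heisX (n : ℕ) (j : Fin (2 * n)) (u : Fin (2 * n + 1) → ℝ) :
    Fin (2 * n + 1) → ℝ :=
  if h : (j : ℕ) < n then
    stdBasis ⟨j, by have := j.isLt; omega⟩
      - u ⟨n + j, by have := j.isLt; omega⟩ • stdBasis ⟨2 * n, by omega⟩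
  else
    stdBasis ⟨j, by have := j.isLt; omega⟩
      + u ⟨(j : ℕ) - n, by have := j.isLt; omega⟩ • stdBasis ⟨2 * n, by omega⟩

/-- Let `X̂_j = X_j + A_j` where the `X_j` are the
Heisenberg-model fields and `A_j(u) = ∑ᵢ aⁱⱼ(u) eᵢ` with `aⁱⱼ(0) = 0` and
`∂a^{2n+1}ⱼ/∂uᵏ(0) = 0`.  Then for each `α ∈ {1, …, n}`, the `2n+1` vectors
`X̂_1(0), …, X̂_{2n}(0)` together with `[X̂_α, X̂_{n+α}](0)` span `ℝ^{2n+1}`. -/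
theorem stmt7 (n : ℕ) (hn : 1 ≤ n)
    (a : Fin (2 * n + 1) → Fin (2 * n) → (Fin (2 * n + 1) → ℝ) → ℝ)
    (ha_smooth : ∀ i j, ContDiff ℝ (⊤ : ℕ∞) (a i j))
    (ha0 : ∀ i j, a i j 0 = 0)
    (ha1 : ∀ j, fderiv ℝ (a ⟨2 * n, by omega⟩ j) 0 = 0)
    (Xhat : Fin (2 * n) → (Fin (2 * n + 1) → ℝ) → (Fin (2 * n + 1) → ℝ))
    (hXhat : ∀ j u, Xhat j u = heisX n j u + fun i => a i j u)
    (α : Fin n) :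
    Submodule.span ℝ
        ((Set.range fun j : Fin (2 * n) => Xhat j 0) ∪
          {lieBracket (Xhat ⟨α, by have := α.isLt; omega⟩)
            (Xhat ⟨n + α, by have := α.isLt; omega⟩) 0})
      = (⊤ : Submodule ℝ (Fin (2 * n + 1) → ℝ)) := by
  have hαn : (α : ℕ) < n := α.isLt
  set i0 : Fin (2 * n + 1) := ⟨2 * n, by omega⟩
  set jα : Fin (2 * n) := ⟨α, by omega⟩
  set jβ : Fin (2 * n) := ⟨n + α, by omega⟩
  set kα : Fin (2 * n + 1) := ⟨α, by omega⟩
  set kβ : Fin (2 * n + 1) := ⟨n + α, by omega⟩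
  have hjαv : (jα : ℕ) = α := rfl
  have hjβv : (jβ : ℕ) = n + α := rfl
  have hkαv : (kα : ℕ) = α := rfl
  have hkβv : (kβ : ℕ) = n + α := rfl
  have hi0v : (i0 : ℕ) = 2 * n := rfl
  set S : Set (Fin (2 * n + 1) → ℝ) :=
    (Set.range fun j : Fin (2 * n) => Xhat j 0) ∪
      {lieBracket (Xhat jα) (Xhat jβ) 0}
  set b : Fin (2 * n + 1) → ℝ := lieBracket (Xhat jα) (Xhat jβ) 0 with hb
  -- Step A : values at 0
  have hX0 : ∀ j : Fin (2 * n), Xhat j 0 = stdBasis ⟨j, by have := j.isLt; omega⟩ := by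
    intro j
    rw [hXhat]
    have ha' : (fun i => a i j 0) = (0 : Fin (2 * n + 1) → ℝ) := funext fun i => ha0 i j
    rw [ha', add_zero, heisX]
    split <;> simp
  -- Step B : differentiability of each component of Xhat j
  have hcomp : ∀ (j : Fin (2 * n)) (i : Fin (2 * n + 1)),
      DifferentiableAt ℝ (fun u => Xhat j u i) 0 := by
    intro j i
    have h1 : (fun u : Fin (2 * n + 1) → ℝ => Xhat j u i)
        = fun u => heisX n j u i + a i j u := by
      funext u; rw [hXhat]; rfl
    rw [h1]
    refine DifferentiableAt.add ?_ (((ha_smooth i j).differentiable (by simp)) 0)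
    by_cases h : (j : ℕ) < n
    · have h2 : (fun u : Fin (2 * n + 1) → ℝ => heisX n j u i)
          = fun u => (stdBasis ⟨j, by have := j.isLt; omega⟩ : Fin (2 * n + 1) → ℝ) i
              - u ⟨n + j, by have := j.isLt; omega⟩
                * (stdBasis ⟨2 * n, by omega⟩ : Fin (2 * n + 1) → ℝ) i := by
        funext u; rw [heisX, dif_pos h]; rfl
      rw [h2]
      exact (differentiableAt_const _).sub
        ((differentiableAt_apply _ _).mul (differentiableAt_const _))
    · have h2 : (fun u : Fin (2 * n + 1) → ℝ => heisX n j u i)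
          = fun u => (stdBasis ⟨j, by have := j.isLt; omega⟩ : Fin (2 * n + 1) → ℝ) i
              + u ⟨(j : ℕ) - n, by have := j.isLt; omega⟩
                * (stdBasis ⟨2 * n, by omega⟩ : Fin (2 * n + 1) → ℝ) i := by
        funext u; rw [heisX, dif_neg h]; rfl
      rw [h2]
      exact (differentiableAt_const _).add
        ((differentiableAt_apply _ _).mul (differentiableAt_const _))
  -- projection of the fderiv to a component
  have hproj : ∀ (j : Fin (2 * n)) (v : Fin (2 * n + 1) → ℝ) (i : Fin (2 * n + 1)),
      fderiv ℝ (Xhat j) 0 v i = fderiv ℝ (fun u => Xhat j u i) 0 v := by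
    intro j v i
    have h2 : fderiv ℝ (Xhat j) 0
        = ContinuousLinearMap.pi (fun i => fderiv ℝ (fun u => Xhat j u i) 0) :=
      fderiv_pi (fun i => hcomp j i)
    rw [h2, ContinuousLinearMap.pi_apply]
  -- key : derivative of last component
  have key : ∀ (j : Fin (2 * n)) (k : Fin (2 * n + 1)) (s : ℝ),
      (fun u : Fin (2 * n + 1) → ℝ => Xhat j u i0) = (fun u => s * u k + a i0 j u) →
      ∀ v, fderiv ℝ (fun u => Xhat j u i0) 0 v = s * v k := by
    intro j k s h v
    rw [h]
    have hd1 : DifferentiableAt ℝ (fun u : Fin (2 * n + 1) → ℝ => s * u k) 0 :=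
      (differentiableAt_apply _ _).const_mul s
    have hd2 : DifferentiableAt ℝ (a i0 j) 0 := ((ha_smooth i0 j).differentiable (by simp)) 0
    have ha1' : fderiv ℝ (a i0 j) 0 = 0 := by
      have := ha1 j
      convert this using 3
    rw [fderiv_fun_add hd1 hd2, ContinuousLinearMap.add_apply, ha1',
      fderiv_const_mul (differentiableAt_apply _ _) s,
      (hasFDerivAt_apply k (0 : Fin (2 * n + 1) → ℝ)).fderiv]
    simp [ContinuousLinearMap.proj]
  -- the component formulas
  have hfα : (fun u : Fin (2 * n + 1) → ℝ => Xhat jα u i0)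
      = fun u => (-1 : ℝ) * u kβ + a i0 jα u := by
    funext u
    rw [hXhat]
    show heisX n jα u i0 + a i0 jα u = _
    rw [heisX, dif_pos (show ((jα : ℕ) < n) from hαn)]
    have hne : i0 ≠ kα := Fin.ne_of_val_ne (by rw [hi0v, hkαv]; omega)
    show (stdBasis kα - u kβ • stdBasis i0) i0 + a i0 jα u = _
    simp only [Pi.sub_apply, Pi.smul_apply, smul_eq_mul, stdBasis,
      Pi.single_eq_same, Pi.single_eq_of_ne hne]
    ring
  have hfβ : (fun u : Fin (2 * n + 1) → ℝ => Xhat jβ u i0)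
      = fun u => (1 : ℝ) * u kα + a i0 jβ u := by
    funext u
    rw [hXhat]
    show heisX n jβ u i0 + a i0 jβ u = _
    rw [heisX, dif_neg (show ¬((jβ : ℕ) < n) by rw [hjβv]; omega)]
    have e2 : (⟨(jβ : ℕ) - n, by have := jβ.isLt; omega⟩ : Fin (2 * n + 1)) = kα := by
      apply Fin.ext
      simp only [Fin.val_mk, hjβv, hkαv]
      omega
    rw [e2]
    have hne : i0 ≠ kβ := Fin.ne_of_val_ne (by rw [hi0v, hkβv]; omega)
    show (stdBasis kβ + u kα • stdBasis i0) i0 + a i0 jβ u = _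
    simp only [Pi.add_apply, Pi.smul_apply, smul_eq_mul, stdBasis,
      Pi.single_eq_same, Pi.single_eq_of_ne hne]
    ring
  -- compute b i0 = 2
  have hbi0 : b i0 = 2 := by
    have h1 : b i0 = fderiv ℝ (Xhat jβ) 0 (Xhat jα 0) i0
        - fderiv ℝ (Xhat jα) 0 (Xhat jβ 0) i0 := by
      rw [hb, lieBracket]; rfl
    rw [h1, hproj, hproj, key jβ kα 1 hfβ, key jα kβ (-1) hfα, hX0, hX0]
    have v1 : (stdBasis ⟨(jα : ℕ), by have := jα.isLt; omega⟩ : Fin (2 * n + 1) → ℝ) kα = 1 := by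
      have e : (⟨(jα : ℕ), by have := jα.isLt; omega⟩ : Fin (2 * n + 1)) = kα := rfl
      rw [e, stdBasis, Pi.single_eq_same]
    have v2 : (stdBasis ⟨(jβ : ℕ), by have := jβ.isLt; omega⟩ : Fin (2 * n + 1) → ℝ) kβ = 1 := by
      have e : (⟨(jβ : ℕ), by have := jβ.isLt; omega⟩ : Fin (2 * n + 1)) = kβ := rfl
      rw [e, stdBasis, Pi.single_eq_same]
    rw [v1, v2]; ring
  -- membership of basis vectors
  have hmem1 : ∀ j : Fin (2 * n),
      (stdBasis ⟨j, by have := j.isLt; omega⟩ : Fin (2 * n + 1) → ℝ) ∈ Submodule.span ℝ S := by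
    intro j
    exact Submodule.subset_span (Or.inl ⟨j, (hX0 j).symm ▸ rfl⟩)
  have hbmem : b ∈ Submodule.span ℝ S := Submodule.subset_span (Or.inr rfl)
  -- decomposition lemma
  have hdecomp : ∀ w : Fin (2 * n + 1) → ℝ,
      w - w i0 • stdBasis i0 ∈ Submodule.span ℝ S := by
    intro w
    have hsum : ∑ i : Fin (2 * n + 1), w i • (stdBasis i : Fin (2 * n + 1) → ℝ) = w := by
      have h3 : ∀ i : Fin (2 * n + 1), w i • (stdBasis i : Fin (2 * n + 1) → ℝ)
          = Pi.single i (w i) := by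
        intro i
        rw [stdBasis, ← Pi.single_smul, smul_eq_mul, mul_one]
      rw [Finset.sum_congr rfl (fun i _ => h3 i), Finset.univ_sum_single]
    have hsplit : ∑ i : Fin (2 * n + 1), w i • (stdBasis i : Fin (2 * n + 1) → ℝ)
        = (∑ j : Fin (2 * n),
            w (Fin.castSucc j) • (stdBasis (Fin.castSucc j) : Fin (2 * n + 1) → ℝ))
          + w (Fin.last (2 * n)) • stdBasis (Fin.last (2 * n)) :=
      Fin.sum_univ_castSucc _
    have hlast : Fin.last (2 * n) = i0 := rfl
    have h4 : w - w i0 • stdBasis i0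
        = ∑ j : Fin (2 * n),
            w (Fin.castSucc j) • (stdBasis (Fin.castSucc j) : Fin (2 * n + 1) → ℝ) := by
      rw [sub_eq_iff_eq_add]
      calc w = ∑ i : Fin (2 * n + 1), w i • (stdBasis i : Fin (2 * n + 1) → ℝ) := hsum.symm
        _ = _ := by rw [hsplit, hlast]
    rw [h4]
    refine Submodule.sum_mem _ (fun j _ => Submodule.smul_mem _ _ ?_)
    have e : Fin.castSucc j = (⟨(j : ℕ), by have := j.isLt; omega⟩ : Fin (2 * n + 1)) := rfl
    rw [e]
    exact hmem1 j
  -- e_{i0} ∈ span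
  have hei0 : (stdBasis i0 : Fin (2 * n + 1) → ℝ) ∈ Submodule.span ℝ S := by
    have h1 : b i0 • (stdBasis i0 : Fin (2 * n + 1) → ℝ) ∈ Submodule.span ℝ S := by
      have := Submodule.sub_mem _ hbmem (hdecomp b)
      simpa using this
    have h2 := Submodule.smul_mem (Submodule.span ℝ S) (b i0)⁻¹ h1
    rw [smul_smul, inv_mul_cancel₀ (by rw [hbi0]; norm_num), one_smul] at h2
    exact h2
  -- conclude
  rw [eq_top_iff]
  intro x _
  have hx : x = (x - x i0 • stdBasis i0) + x i0 • stdBasis i0 := by abel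
  rw [hx]
  exact Submodule.add_mem _ (hdecomp x) (Submodule.smul_mem _ _ hei0)
end

section
/- Let t : ℂ^{n+1} → ℂ^{n+1} be the map t(z) = (i/2)·z. Then for every z ∈ ℂ^{n+1} with z^{n+1} ≠ 0 and every α ∈ {1,…,n}, the real Lie bracket satisfies [t, Z_α](z) = −(i/2)·Z_α(z), i.e. D_ℝZ_α(z)[t(z)] − D_ℝt(z)[Z_α(z)] = −(i/2)·Z_α(z), where D_ℝ denotes the Fréchet derivative of a map ℂ^{n+1} → ℂ^{n+1} regarded as a map between real vector spaces. -/
/-!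
`Z_α` is invariant under the circle action `z ↦ e^{iθ} z` (both `T_β` and the coefficient
`conj(z^α) z^{n+1} / (|z^{n+1}| (1 + |z^{n+1}|))` are), and `t(z) = (i/2) z` is the velocity of
the orbit `θ ↦ e^{iθ/2} z` at `θ = 0`. Hence `D Z_α(z)[t(z)] = 0`, while `t` is linear, so
`D t(z)[Z_α(z)] = (i/2) Z_α(z)`.
-/

open ComplexConjugate

/-- The CR-tangential `(1,0)` vector field `T_β(z) = e_β - conj(z^β) • z` on
`ℂ^{n+1}`, representing `T_β = ∂/∂z^β - conj(z^β) ∑_γ z^γ ∂/∂z^γ`. -/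
noncomputable def sphT (n : ℕ) (β : Fin (n + 1)) (z : Fin (n + 1) → ℂ) :
    Fin (n + 1) → ℂ :=
  (Pi.single β 1 : Fin (n + 1) → ℂ) - conj (z β) • z

/-- The local frame
`Z_α(z) = T_α(z) - (conj(z^α) z^{n+1} / (|z^{n+1}| (1 + |z^{n+1}|))) T_{n+1}(z)`
for the CR structure of the sphere on the set `{z^{n+1} ≠ 0}`. -/
noncomputable def sphZ (n : ℕ) (α : Fin n) (z : Fin (n + 1) → ℂ) :
    Fin (n + 1) → ℂ :=
  sphT n (Fin.castSucc α) z -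
    ((conj (z (Fin.castSucc α)) * z (Fin.last n)) /
        ((‖z (Fin.last n)‖ : ℂ) *
          (1 + (‖z (Fin.last n)‖ : ℂ)))) • sphT n (Fin.last n) z

theorem fderiv_smul_self_eq_zero_of_circle_invariant {E F : Type*}
    [NormedAddCommGroup E] [NormedSpace ℂ E] [NormedAddCommGroup F] [NormedSpace ℝ F]
    {f : E → F} {z : E} (hf : DifferentiableAt ℝ f z)
    (hinv : ∀ u : ℂ, ‖u‖ = 1 → f (u • z) = f z) {c : ℂ} (hc : c.re = 0) :
    fderiv ℝ f z (c • z) = 0 := by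
  have horbit : HasDerivAt (fun θ : ℝ => Complex.exp (θ * c) • z) (c • z) 0 := by
    have hexp : HasDerivAt (fun θ : ℝ => Complex.exp (θ * c)) c 0 := by
      simpa using ((Complex.ofRealCLM.hasDerivAt (x := 0)).mul_const c).cexp
    exact hexp.smul_const z
  have hcomp : HasDerivAt (fun θ : ℝ => f (Complex.exp (θ * c) • z))
      (fderiv ℝ f z (c • z)) 0 :=
    hf.hasFDerivAt.comp_hasDerivAt_of_eq 0 horbit (by simp)
  have hconst : (fun θ : ℝ => f (Complex.exp (θ * c) • z)) = fun _ => f z := by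
    funext θ
    exact hinv _ (by simp [Complex.norm_exp, hc])
  rw [hconst] at hcomp
  exact hcomp.unique (hasDerivAt_const 0 _)

theorem sphT_smul (n : ℕ) (β : Fin (n + 1)) {u : ℂ} (hu : conj u * u = 1)
    (z : Fin (n + 1) → ℂ) : sphT n β (u • z) = sphT n β z := by
  rw [sphT, sphT, Pi.smul_apply, smul_eq_mul, map_mul, smul_smul, mul_right_comm, hu, one_mul]

theorem sphZ_smul (n : ℕ) (α : Fin n) {u : ℂ} (hu : ‖u‖ = 1)
    (z : Fin (n + 1) → ℂ) : sphZ n α (u • z) = sphZ n α z := by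
  have hu' : conj u * u = 1 := by
    rw [mul_comm, Complex.mul_conj, Complex.normSq_eq_norm_sq, hu]
    norm_num
  simp only [sphZ, sphT_smul n _ hu', Pi.smul_apply, smul_eq_mul, map_mul, norm_mul, hu, one_mul]
  congr 2
  linear_combination conj (z (Fin.castSucc α)) * z (Fin.last n) /
    ((‖z (Fin.last n)‖ : ℂ) * (1 + (‖z (Fin.last n)‖ : ℂ))) * hu'

theorem differentiable_sphT (n : ℕ) (β : Fin (n + 1)) : Differentiable ℝ (sphT n β) := by
  unfold sphT
  fun_prop

theorem differentiableAt_sphZ (n : ℕ) (α : Fin n) {z : Fin (n + 1) → ℂ}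
    (hz : z (Fin.last n) ≠ 0) : DifferentiableAt ℝ (sphZ n α) z := by
  have hnorm : DifferentiableAt ℝ (fun w : Fin (n + 1) → ℂ => (‖w (Fin.last n)‖ : ℂ)) z :=
    Complex.ofRealCLM.differentiableAt.comp z ((differentiableAt_apply (Fin.last n) z).norm ℝ hz)
  have hden : (‖z (Fin.last n)‖ : ℂ) * (1 + (‖z (Fin.last n)‖ : ℂ)) ≠ 0 := by
    have : 0 < ‖z (Fin.last n)‖ * (1 + ‖z (Fin.last n)‖) := by positivity
    exact_mod_cast this.ne'
  unfold sphZ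
  refine (differentiable_sphT n _ z).sub (.fun_smul ?_ (differentiable_sphT n _ z))
  simp only [div_eq_mul_inv]
  fun_prop (disch := exact hden)

theorem fderiv_const_smul_id {E : Type*} [NormedAddCommGroup E] [NormedSpace ℂ E] (c : ℂ)
    (z v : E) : fderiv ℝ (fun w : E => c • w) z v = c • v := by
  have h : HasFDerivAt (fun w : E => c • w) (c • ContinuousLinearMap.id ℝ E) z :=
    (hasFDerivAt_id z).fun_const_smul c
  rw [h.fderiv]
  rfl

theorem stmt13_general (n : ℕ) (α : Fin n) (z : Fin (n + 1) → ℂ)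
    (hzlast : z (Fin.last n) ≠ 0) :
    fderiv ℝ (sphZ n α) z ((Complex.I / 2) • z)
        - fderiv ℝ (fun w : Fin (n + 1) → ℂ => (Complex.I / 2) • w) z (sphZ n α z)
      = (-(Complex.I / 2)) • sphZ n α z := by
  have horbit : fderiv ℝ (sphZ n α) z ((Complex.I / 2) • z) = 0 :=
    fderiv_smul_self_eq_zero_of_circle_invariant (differentiableAt_sphZ n α hzlast)
      (fun u hu => sphZ_smul n α hu z) (by simp)
  rw [horbit, fderiv_const_smul_id, zero_sub, neg_smul]

/-- Let `t(z) = (i/2) z`, representing the characteristic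
direction `T` of the CR sphere.  Then for every `z` with `z^{n+1} ≠ 0` and every
`α ∈ {1, …, n}`, the real Lie bracket satisfies
`[t, Z_α](z) = D_ℝ Z_α(z)[t(z)] - D_ℝ t(z)[Z_α(z)] = -(i/2) • Z_α(z)`,
where `D_ℝ` is the Fréchet derivative over `ℝ`. -/
theorem stmt13 (n : ℕ) (hn : 1 ≤ n) (α : Fin n) (z : Fin (n + 1) → ℂ)
    (hzlast : z (Fin.last n) ≠ 0) :
    fderiv ℝ (sphZ n α) z ((Complex.I / 2) • z)
        - fderiv ℝ (fun w : Fin (n + 1) → ℂ => (Complex.I / 2) • w) z (sphZ n α z)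
      = (-(Complex.I / 2)) • sphZ n α z :=
  stmt13_general n α z hzlast
end
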